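/- Let ψ : [0,T] → ℝ be continuous, and suppose K : ℝ → ℝ is measurable with ∫_ℝ |K(x)| dx < ∞ and ∫_ℝ |u·K(u)| du < ∞. Then √Δ_n · b_n · Σ_{j=1}^n ψ(t_{j−1}) · ∫_{(t_{j−1} − T)/b_n}^0 L(u) du converges, as n → ∞, to θ · ( ∫_0^T ψ(s) ds ) · ( ∫_{−∞}^0 L(u) du ). -/

import Mathlib

open MeasureTheory Filter Topology
open scoped ENNReal NNReal

noncomputable def Lfun (K : ℝ → ℝ) (t : ℝ) : ℝ :=
  if 0 < t then ∫ u in Set.Ioi t, K u else -∫ u in Set.Iic t, K u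

lemma Lfun_eq (K : ℝ → ℝ) {t : ℝ} (ht : t ≤ 0) :
    Lfun K t = -∫ u in Set.Iic t, K u := by
  rw [Lfun, if_neg (not_lt.2 ht)]

lemma F_cont (K : ℝ → ℝ) (hKint : Integrable K) :
    Continuous (fun t => ∫ u in Set.Iic t, K u) := by
  have h : (fun t : ℝ => ∫ u in Set.Iic t, K u)
      = fun t : ℝ => (∫ u in Set.Iic (0:ℝ), K u) + ∫ u in (0:ℝ)..t, K u := by
    funext t
    have := intervalIntegral.integral_Iic_sub_Iic (hKint.integrableOn (s := Set.Iic 0))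
      (hKint.integrableOn (s := Set.Iic t))
    linarith
  rw [h]
  exact continuous_const.add
    (intervalIntegral.continuous_primitive (fun a b => hKint.intervalIntegrable) 0)

lemma Lfun_integrableOn (K : ℝ → ℝ) (hK : Measurable K) (hKint : Integrable K)
    (hKu : Integrable (fun u : ℝ => u * K u)) :
    IntegrableOn (Lfun K) (Set.Iic 0) := by
  set F : ℝ → ℝ := fun t => ∫ u in Set.Iic t, K u with hFdef
  have hF : IntegrableOn F (Set.Iic 0) := by
    refine ⟨((F_cont K hKint).aestronglyMeasurable).restrict, ?_⟩
    rw [HasFiniteIntegral]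
    set N : ℝ → ℝ≥0∞ := fun u => (‖K u‖₊ : ℝ≥0∞) with hN
    have hNmeas : Measurable N := hK.nnnorm.coe_nnreal_ennreal
    set f : ℝ → ℝ → ℝ≥0∞ := fun t u => if u ≤ t ∧ t ≤ 0 then N u else 0 with hf
    have hfmeas : Measurable (Function.uncurry f) := by
      apply Measurable.ite
      · exact (measurableSet_le measurable_snd measurable_fst).inter
          (measurableSet_le measurable_fst measurable_const)
      · exact hNmeas.comp measurable_snd
      · exact measurable_const
    have key : ∫⁻ t in Set.Iic (0:ℝ), ‖F t‖₊ ≤ ∫⁻ u, (‖u * K u‖₊ : ℝ≥0∞) := by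
      have step1 : ∫⁻ t in Set.Iic (0:ℝ), ‖F t‖₊ ≤ ∫⁻ t in Set.Iic (0:ℝ), ∫⁻ u in Set.Iic t, N u := by
        apply lintegral_mono
        intro t
        exact enorm_integral_le_lintegral_enorm _
      have step2 : ∫⁻ t in Set.Iic (0:ℝ), ∫⁻ u in Set.Iic t, N u = ∫⁻ t, ∫⁻ u, f t u := by
        rw [← lintegral_indicator measurableSet_Iic _]
        congr 1
        funext t
        by_cases ht : t ≤ 0
        · rw [Set.indicator_of_mem (Set.mem_Iic.2 ht)]
          rw [← lintegral_indicator measurableSet_Iic _]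
          congr 1
          funext u
          by_cases hu : u ≤ t
          · rw [Set.indicator_of_mem (Set.mem_Iic.2 hu)]
            simp [hf, hu, ht]
          · rw [Set.indicator_of_notMem (fun h => hu (Set.mem_Iic.1 h))]
            simp [hf, hu]
        · rw [Set.indicator_of_notMem (fun h => ht (Set.mem_Iic.1 h))]
          simp only [hf]
          rw [← lintegral_zero]
          congr 1
          funext u
          simp [ht]
      have step3 : ∫⁻ t, ∫⁻ u, f t u = ∫⁻ u, ∫⁻ t, f t u :=
        lintegral_lintegral_swap hfmeas.aemeasurable
      have step4 : ∀ u : ℝ, ∫⁻ t, f t u = N u * ENNReal.ofReal (-u) := by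
        intro u
        have : ∀ t : ℝ, f t u = Set.indicator (Set.Icc u 0) (fun _ => N u) t := by
          intro t
          by_cases h : u ≤ t ∧ t ≤ 0
          · rw [Set.indicator_of_mem (Set.mem_Icc.2 h)]; simp [hf, h]
          · rw [Set.indicator_of_notMem (fun hm => h (Set.mem_Icc.1 hm))]
            simp [hf, h]
        simp_rw [this]
        rw [lintegral_indicator measurableSet_Icc _, setLIntegral_const,
          Real.volume_Icc]
        congr 1
        ring_nf
      have step5 : ∫⁻ u, N u * ENNReal.ofReal (-u) ≤ ∫⁻ u, (‖u * K u‖₊ : ℝ≥0∞) := by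
        apply lintegral_mono
        intro u
        have h1 : ENNReal.ofReal (-u) ≤ (‖u‖₊ : ℝ≥0∞) := by
          rw [show (‖u‖₊ : ℝ≥0∞) = ENNReal.ofReal |u| from Real.enorm_eq_ofReal_abs u]
          exact ENNReal.ofReal_le_ofReal (neg_le_abs u)
        calc N u * ENNReal.ofReal (-u) ≤ (‖K u‖₊ : ℝ≥0∞) * (‖u‖₊ : ℝ≥0∞) :=
              mul_le_mul_right h1 _
          _ = (‖u * K u‖₊ : ℝ≥0∞) := by
              rw [← ENNReal.coe_mul, mul_comm]
              norm_cast
              exact (nnnorm_mul u (K u)).symm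
      calc ∫⁻ t in Set.Iic (0:ℝ), ‖F t‖₊ ≤ ∫⁻ t in Set.Iic (0:ℝ), ∫⁻ u in Set.Iic t, N u := step1
        _ = ∫⁻ t, ∫⁻ u, f t u := step2
        _ = ∫⁻ u, ∫⁻ t, f t u := step3
        _ = ∫⁻ u, N u * ENNReal.ofReal (-u) := by simp_rw [step4]
        _ ≤ ∫⁻ u, (‖u * K u‖₊ : ℝ≥0∞) := step5
    exact lt_of_le_of_lt key hKu.hasFiniteIntegral
  have : IntegrableOn (fun t => -F t) (Set.Iic 0) := hF.neg
  exact this.congr_fun (fun t ht => (Lfun_eq K (Set.mem_Iic.1 ht)).symm) measurableSet_Iic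


lemma riemann (T : ℝ) (hT : 0 < T) (ψ : ℝ → ℝ) (hψ : ContinuousOn ψ (Set.Icc 0 T)) :
    Tendsto (fun n : ℕ => (T/n) * ∑ j ∈ Finset.Icc 1 n, ψ (((j:ℝ)-1)*(T/n)))
      atTop (𝓝 (∫ s in (0:ℝ)..T, ψ s)) := by
  have huc : UniformContinuousOn ψ (Set.Icc 0 T) :=
    isCompact_Icc.uniformContinuousOn_of_continuous hψ
  rw [Metric.tendsto_atTop]
  intro ε hε
  obtain ⟨δ, hδ, hδ'⟩ := (Metric.uniformContinuousOn_iff).1 huc (ε/(2*T)) (by positivity)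
  obtain ⟨N, hN⟩ := exists_nat_gt (T/δ)
  refine ⟨max N 1, fun n hn => ?_⟩
  have hn1 : 1 ≤ n := le_trans (le_max_right N 1) hn
  have hnN : (N:ℝ) ≤ n := Nat.cast_le.2 (le_trans (le_max_left N 1) hn)
  have hnpos : (0:ℝ) < n := by exact_mod_cast hn1
  set Δ : ℝ := T/n with hΔdef
  have hΔpos : 0 < Δ := div_pos hT hnpos
  have hΔδ : Δ < δ := by
    rw [hΔdef, div_lt_iff₀ hnpos]
    have : T/δ < n := lt_of_lt_of_le hN hnN
    calc T = δ * (T/δ) := by field_simp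
      _ < δ * n := by exact mul_lt_mul_of_pos_left this hδ
  -- grid points
  have hmem : ∀ i : ℕ, i ≤ n → (i:ℝ)*Δ ∈ Set.Icc (0:ℝ) T := by
    intro i hi
    constructor
    · positivity
    · rw [hΔdef]
      calc (i:ℝ) * (T/n) ≤ (n:ℝ) * (T/n) := by
            apply mul_le_mul_of_nonneg_right (Nat.cast_le.2 hi) (le_of_lt (div_pos hT hnpos))
        _ = T := by field_simp
  have hint : ∀ i : ℕ, i < n → IntervalIntegrable ψ volume ((i:ℝ)*Δ) ((i+1:ℕ)*Δ) := by
    intro i hi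
    apply ContinuousOn.intervalIntegrable
    apply hψ.mono
    rw [Set.uIcc_of_le (by
      apply mul_le_mul_of_nonneg_right _ hΔpos.le
      exact_mod_cast Nat.le_succ i)]
    intro x hx
    exact ⟨le_trans (hmem i hi.le).1 hx.1, le_trans hx.2 (hmem (i+1) hi).2⟩
  have hsplit : ∫ s in (0:ℝ)..T, ψ s = ∑ i ∈ Finset.range n, ∫ s in ((i:ℝ)*Δ)..((i+1:ℕ)*Δ), ψ s := by
    rw [intervalIntegral.sum_integral_adjacent_intervals (fun i hi => hint i hi)]
    norm_num
    rw [hΔdef]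
    field_simp
  -- rewrite sum
  have hsum : (T/n) * ∑ j ∈ Finset.Icc 1 n, ψ (((j:ℝ)-1)*(T/n))
      = ∑ i ∈ Finset.range n, Δ * ψ ((i:ℝ)*Δ) := by
    rw [Finset.mul_sum]
    rw [← Finset.Ico_add_one_right_eq_Icc, Finset.sum_Ico_eq_sum_range]
    rw [show n+1-1 = n by omega]
    apply Finset.sum_congr rfl
    intro i _
    congr 2
    push_cast
    ring
  rw [hsum, hsplit, Real.dist_eq, ← Finset.sum_sub_distrib]
  have hterm : ∀ i ∈ Finset.range n,
      |Δ * ψ ((i:ℝ)*Δ) - ∫ s in ((i:ℝ)*Δ)..((i+1:ℕ)*Δ), ψ s| ≤ ε/(2*T) * Δ := by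
    intro i hi
    rw [Finset.mem_range] at hi
    have h1 : Δ * ψ ((i:ℝ)*Δ) = ∫ _ in ((i:ℝ)*Δ)..((i+1:ℕ)*Δ), ψ ((i:ℝ)*Δ) := by
      rw [intervalIntegral.integral_const, smul_eq_mul]
      congr 1
      push_cast
      ring
    rw [h1, ← intervalIntegral.integral_sub (by simp) (hint i hi)]
    have := intervalIntegral.norm_integral_le_of_norm_le_const
      (C := ε/(2*T)) (f := fun s => ψ ((i:ℝ)*Δ) - ψ s)
      (a := ((i:ℝ)*Δ)) (b := ((i+1:ℕ)*Δ)) ?_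
    · rw [Real.norm_eq_abs] at this
      apply le_trans this
      have : |((i+1:ℕ):ℝ)*Δ - (i:ℝ)*Δ| = Δ := by
        rw [abs_of_nonneg]
        · push_cast; ring
        · push_cast; nlinarith
      rw [this]
    · intro x hx
      rw [Set.uIoc_of_le (by
        apply mul_le_mul_of_nonneg_right _ hΔpos.le
        exact_mod_cast Nat.le_succ i)] at hx
      have hxmem : x ∈ Set.Icc (0:ℝ) T :=
        ⟨le_trans (hmem i hi.le).1 hx.1.le, le_trans hx.2 (hmem (i+1) hi).2⟩
      have hdist : dist ((i:ℝ)*Δ) x < δ := by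
        rw [Real.dist_eq, abs_of_nonpos (by linarith [hx.1])]
        have : x ≤ ((i+1:ℕ):ℝ)*Δ := hx.2
        push_cast at this
        nlinarith
      have := hδ' _ (hmem i hi.le) _ hxmem hdist
      rw [Real.dist_eq, Real.norm_eq_abs] at *
      exact this.le
  calc |∑ i ∈ Finset.range n, (Δ * ψ ((i:ℝ)*Δ) - ∫ s in ((i:ℝ)*Δ)..((i+1:ℕ)*Δ), ψ s)|
      ≤ ∑ i ∈ Finset.range n, |Δ * ψ ((i:ℝ)*Δ) - ∫ s in ((i:ℝ)*Δ)..((i+1:ℕ)*Δ), ψ s| :=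
        Finset.abs_sum_le_sum_abs _ _
    _ ≤ ∑ _i ∈ Finset.range n, ε/(2*T) * Δ := Finset.sum_le_sum hterm
    _ = n * (ε/(2*T) * Δ) := by rw [Finset.sum_const, Finset.card_range, nsmul_eq_mul]
    _ = ε/2 := by rw [hΔdef]; field_simp
    _ < ε := by linarith


lemma Etendsto (T : ℝ) (hT : 0 < T) (L : ℝ → ℝ)
    (hLint : IntegrableOn L (Set.Iic 0) volume)
    (k : ℕ → ℕ) (hk : ∀ n, 0 < k n)
    (hbn : Tendsto (fun n : ℕ => (k n : ℝ) * (T/n)) atTop (𝓝 0))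
    (ψ : ℝ → ℝ) (M : ℝ) (hMpos : 0 < M)
    (hM : ∀ x ∈ Set.Icc (0:ℝ) T, |ψ x| ≤ M) :
    Tendsto (fun n : ℕ => (T/n) * ∑ j ∈ Finset.Icc 1 n,
        ψ (((j:ℝ)-1)*(T/n)) *
          ∫ u in Set.Iic (((((j:ℝ)-1)*(T/n)) - T)/((k n : ℝ)*(T/n))), L u)
      atTop (𝓝 0) := by
  set tail : ℝ → ℝ := fun x => ∫ t in Set.Iic x, |L t| with htaildef
  have habs : IntegrableOn (fun t => |L t|) (Set.Iic 0) volume := hLint.abs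
  have htailmono : ∀ x y : ℝ, x ≤ y → y ≤ 0 → tail x ≤ tail y := by
    intro x y hxy hy0
    apply setIntegral_mono_set (habs.mono_set (Set.Iic_subset_Iic.2 hy0))
    · exact Filter.Eventually.of_forall (fun t => abs_nonneg _)
    · exact HasSubset.Subset.eventuallyLE (Set.Iic_subset_Iic.2 hxy)
  have htailnn : ∀ x : ℝ, 0 ≤ tail x := fun x =>
    setIntegral_nonneg measurableSet_Iic (fun t _ => abs_nonneg _)
  have hrtail : ∀ a : ℝ, a ≤ 0 → |∫ u in Set.Iic a, L u| ≤ tail a := by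
    intro a ha
    have := norm_integral_le_integral_norm (μ := volume.restrict (Set.Iic a)) L
    simpa [Real.norm_eq_abs] using this
  set C0 : ℝ := tail 0 with hC0def
  have hC0 : 0 ≤ C0 := htailnn 0
  -- tail tends to 0
  have htail0 : Tendsto (fun R : ℕ => tail (-(R:ℝ))) atTop (𝓝 0) := by
    have h1 : Tendsto (fun R : ℕ => ∫ t in (-(R:ℝ))..0, |L t|) atTop
        (𝓝 (∫ t in Set.Iic (0:ℝ), |L t|)) :=
      intervalIntegral_tendsto_integral_Iic 0 habs
        (tendsto_neg_atTop_atBot.comp tendsto_natCast_atTop_atTop)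
    have h2 : ∀ R : ℕ, tail (-(R:ℝ))
        = (∫ t in Set.Iic (0:ℝ), |L t|) - ∫ t in (-(R:ℝ))..0, |L t| := by
      intro R
      have := intervalIntegral.integral_Iic_sub_Iic
        (habs.mono_set (Set.Iic_subset_Iic.2 (neg_nonpos.2 (Nat.cast_nonneg R)))) habs
      simp only [htaildef]
      linarith
    simp_rw [h2]
    have := (tendsto_const_nhds (x := ∫ t in Set.Iic (0:ℝ), |L t|)
      (f := atTop (α := ℕ))).sub h1
    simpa using this
  rw [Metric.tendsto_atTop]
  intro ε hε
  -- choose R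
  obtain ⟨R, hR⟩ := (htail0.eventually_lt_const
    (show (0:ℝ) < ε/(2*M*T) by positivity)).exists
  -- eventually the bn part is small
  have hsmall : ∀ᶠ n : ℕ in atTop, M * C0 * R * ((k n : ℝ) * (T/n)) < ε/2 := by
    have h0 := hbn.const_mul (M * C0 * (R:ℝ))
    rw [mul_zero] at h0
    exact h0.eventually_lt_const (show (0:ℝ) < ε/2 by positivity)
  rw [eventually_atTop] at hsmall
  obtain ⟨N0, hN0⟩ := hsmall
  refine ⟨max N0 1, fun n hn => ?_⟩
  have hn1 : 1 ≤ n := le_trans (le_max_right N0 1) hn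
  have hnpos : (0:ℝ) < n := by exact_mod_cast hn1
  have hkpos : (0:ℝ) < k n := by exact_mod_cast hk n
  have hΔpos : 0 < T/(n:ℝ) := div_pos hT hnpos
  rw [Real.dist_eq, sub_zero]
  -- the a formula
  have ha : ∀ j : ℕ, ((((j:ℝ)-1)*(T/n)) - T)/((k n : ℝ)*(T/n))
      = ((j:ℝ)-1-n)/(k n : ℝ) := by
    intro j
    field_simp
  -- a ≤ 0 for j ≤ n
  have ha0 : ∀ j : ℕ, j ≤ n → ((j:ℝ)-1-n)/(k n : ℝ) ≤ 0 := by
    intro j hj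
    apply div_nonpos_of_nonpos_of_nonneg _ hkpos.le
    have : (j:ℝ) ≤ n := by exact_mod_cast hj
    linarith
  -- per-term bound
  have hterm : ∀ j ∈ Finset.Icc 1 n,
      |ψ (((j:ℝ)-1)*(T/n)) *
          ∫ u in Set.Iic (((((j:ℝ)-1)*(T/n)) - T)/((k n : ℝ)*(T/n))), L u|
        ≤ M * tail (-(R:ℝ)) + (if R * k n + j ≤ n + 1 then 0 else M * C0) := by
    intro j hj
    rw [Finset.mem_Icc] at hj
    have hj1 : (1:ℝ) ≤ j := by exact_mod_cast hj.1
    have hjn : (j:ℝ) ≤ n := by exact_mod_cast hj.2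
    have hmem : ((j:ℝ)-1)*(T/n) ∈ Set.Icc (0:ℝ) T := by
      constructor
      · apply mul_nonneg (by linarith) hΔpos.le
      · calc ((j:ℝ)-1)*(T/n) ≤ (n:ℝ)*(T/n) := by
              apply mul_le_mul_of_nonneg_right (by linarith) hΔpos.le
          _ = T := by field_simp
    rw [abs_mul, ha j]
    by_cases hfar : R * k n + j ≤ n + 1
    · rw [if_pos hfar]
      have hfar' : ((j:ℝ)-1-n)/(k n : ℝ) ≤ -(R:ℝ) := by
        rw [div_le_iff₀ hkpos]
        have : (R:ℝ) * k n + j ≤ (n:ℝ) + 1 := by exact_mod_cast hfar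
        nlinarith
      have := hrtail _ (ha0 j hj.2)
      calc |ψ (((j:ℝ)-1)*(T/n))| * |∫ u in Set.Iic (((j:ℝ)-1-n)/(k n : ℝ)), L u|
          ≤ M * tail (-(R:ℝ)) := by
            apply mul_le_mul (hM _ hmem)
              (le_trans this (htailmono _ _ hfar' (neg_nonpos.2 (Nat.cast_nonneg R))))
              (abs_nonneg _) hMpos.le
        _ ≤ M * tail (-(R:ℝ)) + 0 := by linarith
    · rw [if_neg hfar]
      have := hrtail _ (ha0 j hj.2)
      have h2 : |∫ u in Set.Iic (((j:ℝ)-1-n)/(k n : ℝ)), L u| ≤ C0 :=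
        le_trans this (htailmono _ _ (ha0 j hj.2) le_rfl)
      have h3 : |ψ (((j:ℝ)-1)*(T/n))| * |∫ u in Set.Iic (((j:ℝ)-1-n)/(k n : ℝ)), L u|
          ≤ M * C0 := mul_le_mul (hM _ hmem) h2 (abs_nonneg _) hMpos.le
      have h4 : 0 ≤ M * tail (-(R:ℝ)) := mul_nonneg hMpos.le (htailnn _)
      linarith
  -- sum bound
  have hsum : |∑ j ∈ Finset.Icc 1 n,
      ψ (((j:ℝ)-1)*(T/n)) *
        ∫ u in Set.Iic (((((j:ℝ)-1)*(T/n)) - T)/((k n : ℝ)*(T/n))), L u|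
      ≤ n * (M * tail (-(R:ℝ))) + (R * k n : ℕ) * (M * C0) := by
    calc |∑ j ∈ Finset.Icc 1 n, _| ≤ ∑ j ∈ Finset.Icc 1 n,
          |ψ (((j:ℝ)-1)*(T/n)) *
            ∫ u in Set.Iic (((((j:ℝ)-1)*(T/n)) - T)/((k n : ℝ)*(T/n))), L u| :=
          Finset.abs_sum_le_sum_abs _ _
      _ ≤ ∑ j ∈ Finset.Icc 1 n,
            (M * tail (-(R:ℝ)) + (if R * k n + j ≤ n + 1 then 0 else M * C0)) :=
          Finset.sum_le_sum hterm
      _ = (Finset.Icc 1 n).card * (M * tail (-(R:ℝ)))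
            + ∑ j ∈ Finset.Icc 1 n, (if R * k n + j ≤ n + 1 then 0 else M * C0) := by
          rw [Finset.sum_add_distrib, Finset.sum_const, nsmul_eq_mul]
      _ ≤ n * (M * tail (-(R:ℝ))) + (R * k n : ℕ) * (M * C0) := by
          have hcard1 : ((Finset.Icc 1 n).card : ℝ) = n := by
            rw [Nat.card_Icc]; norm_num
          have hite : ∑ j ∈ Finset.Icc 1 n, (if R * k n + j ≤ n + 1 then (0:ℝ) else M * C0)
              = (((Finset.Icc 1 n).filter (fun j => ¬(R * k n + j ≤ n + 1))).card : ℝ)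
                  * (M * C0) := by
            rw [Finset.sum_ite, Finset.sum_const, Finset.sum_const]
            simp [nsmul_eq_mul]
          have hcard2 : ((Finset.Icc 1 n).filter (fun j => ¬(R * k n + j ≤ n + 1))).card
              ≤ R * k n := by
            calc ((Finset.Icc 1 n).filter (fun j => ¬(R * k n + j ≤ n + 1))).card
                ≤ (Finset.Ioc (n + 1 - R * k n) n).card := by
                  apply Finset.card_le_card
                  intro j hj
                  simp only [Finset.mem_filter, Finset.mem_Icc] at hj
                  rw [Finset.mem_Ioc]
                  omega
              _ = n - (n + 1 - R * k n) := by rw [Nat.card_Ioc]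
              _ ≤ R * k n := by omega
          rw [hite, hcard1]
          have hMC0 : (0:ℝ) ≤ M * C0 := mul_nonneg hMpos.le hC0
          have : ((((Finset.Icc 1 n).filter (fun j => ¬(R * k n + j ≤ n + 1))).card : ℕ) : ℝ)
              ≤ ((R * k n : ℕ) : ℝ) := Nat.cast_le.2 hcard2
          nlinarith [mul_le_mul_of_nonneg_right this hMC0]
  -- conclude
  have h1 : M * T * tail (-(R:ℝ)) < ε/2 := by
    have := mul_lt_mul_of_pos_left hR (show (0:ℝ) < M * T by positivity)
    calc M * T * tail (-(R:ℝ)) < M * T * (ε/(2*M*T)) := this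
      _ = ε/2 := by field_simp
  have h2 : M * C0 * R * ((k n : ℝ) * (T/n)) < ε/2 :=
    hN0 n (le_trans (le_max_left N0 1) hn)
  calc |(T/n) * ∑ j ∈ Finset.Icc 1 n,
        ψ (((j:ℝ)-1)*(T/n)) *
          ∫ u in Set.Iic (((((j:ℝ)-1)*(T/n)) - T)/((k n : ℝ)*(T/n))), L u|
      = (T/n) * |∑ j ∈ Finset.Icc 1 n,
        ψ (((j:ℝ)-1)*(T/n)) *
          ∫ u in Set.Iic (((((j:ℝ)-1)*(T/n)) - T)/((k n : ℝ)*(T/n))), L u| := by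
        rw [abs_mul, abs_of_pos hΔpos]
    _ ≤ (T/n) * ((n:ℝ) * (M * tail (-(R:ℝ))) + ((R * k n : ℕ) : ℝ) * (M * C0)) := by
        apply mul_le_mul_of_nonneg_left hsum hΔpos.le
    _ = M * T * tail (-(R:ℝ)) + M * C0 * R * ((k n : ℝ) * (T/n)) := by
        push_cast
        field_simp
    _ < ε/2 + ε/2 := by exact add_lt_add h1 h2
    _ = ε := by ring


theorem stmt_19
    (T : ℝ) (hT : 0 < T)
    (K : ℝ → ℝ) (hK : Measurable K) (hKint : Integrable K)
    (hKu : Integrable (fun u : ℝ => u * K u))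
    (k : ℕ → ℕ) (hk : ∀ n, 0 < k n)
    (θ : ℝ) (hθpos : 0 < θ)
    (hθ : Tendsto (fun n : ℕ => (k n : ℝ) * Real.sqrt (T / n)) atTop (𝓝 θ))
    (ψ : ℝ → ℝ) (hψ : ContinuousOn ψ (Set.Icc 0 T)) :
    Tendsto (fun n : ℕ =>
        Real.sqrt (T / n) * ((k n : ℝ) * (T / n)) *
          ∑ j ∈ Finset.Icc 1 n,
            ψ (((j : ℝ) - 1) * (T / n)) *
              ∫ u in ((((j : ℝ) - 1) * (T / n) - T) / ((k n : ℝ) * (T / n)))..(0:ℝ),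
                Lfun K u)
      atTop (𝓝 (θ * (∫ s in (0:ℝ)..T, ψ s) * ∫ u in Set.Iic (0:ℝ), Lfun K u)) := by
  have hLint : IntegrableOn (Lfun K) (Set.Iic 0) volume := Lfun_integrableOn K hK hKint hKu
  set I : ℝ := ∫ u in Set.Iic (0:ℝ), Lfun K u with hIdef
  -- bound on ψ
  obtain ⟨M0, hM0⟩ := isCompact_Icc.exists_bound_of_continuousOn hψ
  set M : ℝ := max M0 1 with hMdef
  have hMpos : 0 < M := lt_of_lt_of_le zero_lt_one (le_max_right M0 1)
  have hM : ∀ x ∈ Set.Icc (0:ℝ) T, |ψ x| ≤ M := by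
    intro x hx
    calc |ψ x| = ‖ψ x‖ := (Real.norm_eq_abs _).symm
      _ ≤ M0 := hM0 x hx
      _ ≤ M := le_max_left M0 1
  -- sqrt(T/n) → 0
  have hΔ0 : Tendsto (fun n : ℕ => Real.sqrt (T / n)) atTop (𝓝 0) := by
    have h1 : Tendsto (fun n : ℕ => T / (n:ℝ)) atTop (𝓝 0) :=
      tendsto_const_div_atTop_nhds_zero_nat T
    have h2 := (Real.continuous_sqrt.tendsto 0).comp h1
    rw [Real.sqrt_zero] at h2
    exact h2
  have hsq : ∀ n : ℕ, Real.sqrt (T / n) * Real.sqrt (T / n) = T / n := by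
    intro n
    rcases Nat.eq_zero_or_pos n with h | h
    · simp [h]
    · exact Real.mul_self_sqrt (le_of_lt (div_pos hT (by exact_mod_cast h)))
  have hbn : Tendsto (fun n : ℕ => (k n : ℝ) * (T/n)) atTop (𝓝 0) := by
    have := hθ.mul hΔ0
    rw [mul_zero] at this
    apply this.congr
    intro n
    rw [mul_assoc, hsq]
  -- the error term
  set E : ℕ → ℝ := fun n => (T/n) * ∑ j ∈ Finset.Icc 1 n,
      ψ (((j:ℝ)-1)*(T/n)) *
        ∫ u in Set.Iic (((((j:ℝ)-1)*(T/n)) - T)/((k n : ℝ)*(T/n))), Lfun K u with hEdef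
  have hE : Tendsto E atTop (𝓝 0) :=
    Etendsto T hT (Lfun K) hLint k hk hbn ψ M hMpos hM
  -- main limit of the rewritten expression
  have hmain : Tendsto (fun n : ℕ => ((k n : ℝ) * Real.sqrt (T/n)) *
      (((T/n) * ∑ j ∈ Finset.Icc 1 n, ψ (((j:ℝ)-1)*(T/n))) * I - E n))
      atTop (𝓝 (θ * ((∫ s in (0:ℝ)..T, ψ s) * I - 0))) :=
    hθ.mul (((riemann T hT ψ hψ).mul_const I).sub hE)
  rw [show θ * (∫ s in (0:ℝ)..T, ψ s) * I = θ * ((∫ s in (0:ℝ)..T, ψ s) * I - 0) by ring]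
  apply hmain.congr'
  rw [EventuallyEq, eventually_atTop]
  refine ⟨1, fun n hn1 => ?_⟩
  have hnpos : (0:ℝ) < n := by exact_mod_cast hn1
  have hkpos : (0:ℝ) < k n := by exact_mod_cast hk n
  have hΔpos : 0 < T/(n:ℝ) := div_pos hT hnpos
  -- rewrite each interval integral
  have hsplit : ∀ j ∈ Finset.Icc 1 n,
      ψ (((j:ℝ)-1)*(T/n)) *
        ∫ u in ((((j : ℝ) - 1) * (T / n) - T) / ((k n : ℝ) * (T / n)))..(0:ℝ), Lfun K u
      = ψ (((j:ℝ)-1)*(T/n)) * (I -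
        ∫ u in Set.Iic (((((j:ℝ)-1)*(T/n)) - T)/((k n : ℝ)*(T/n))), Lfun K u) := by
    intro j hj
    rw [Finset.mem_Icc] at hj
    have hjn : (j:ℝ) ≤ n := by exact_mod_cast hj.2
    have hj1 : (1:ℝ) ≤ j := by exact_mod_cast hj.1
    have hnum : ((j:ℝ)-1)*(T/n) - T ≤ 0 := by
      have : ((j:ℝ)-1)*(T/n) ≤ (n:ℝ)*(T/n) :=
        mul_le_mul_of_nonneg_right (by linarith) hΔpos.le
      have hnT : (n:ℝ)*(T/n) = T := by field_simp
      linarith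
    have ha0 : ((((j:ℝ)-1)*(T/n)) - T)/((k n : ℝ)*(T/n)) ≤ 0 :=
      div_nonpos_of_nonpos_of_nonneg hnum (by positivity)
    congr 1
    have := intervalIntegral.integral_Iic_sub_Iic
      (hLint.mono_set (Set.Iic_subset_Iic.2 ha0)) hLint
    rw [hIdef]
    linarith
  rw [Finset.sum_congr rfl hsplit, hEdef]
  simp only [mul_sub, Finset.sum_sub_distrib, ← Finset.sum_mul]
  ring
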